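/- arXiv:2108.04495 — 3 statements merged into one kernel-verified Lean document; each statement's English description precedes it below -/
import Mathlib

section
/- For 0 < k < 1, the ratio of complete elliptic integrals satisfies E(k)/K(k) > √(1-k²). -/
/-- Complete elliptic integral of the first kind. -/
noncomputable def Kell (k : ℝ) : ℝ :=
  ∫ z in (0:ℝ)..1, 1 / (Real.sqrt (1 - k ^ 2 * z ^ 2) * Real.sqrt (1 - z ^ 2))

/-- Complete elliptic integral of the second kind. -/
noncomputable def Eell (k : ℝ) : ℝ :=
  ∫ z in (0:ℝ)..1, Real.sqrt (1 - k ^ 2 * z ^ 2) / Real.sqrt (1 - z ^ 2)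

open MeasureTheory Set Filter Topology Real intervalIntegral



lemma ftc01 (f F : ℝ → ℝ) (L : ℝ)
    (hi : IntegrableOn f (Set.Ioo (0:ℝ) 1))
    (hd : ∀ x ∈ Set.Ico (0:ℝ) 1, HasDerivAt F (f x) x)
    (hL : Filter.Tendsto F (𝓝[<] (1:ℝ)) (𝓝 L)) :
    ∫ z in Set.Ioo (0:ℝ) 1, f z = L - F 0 := by
  have hi' : IntervalIntegrable f volume 0 1 := by
    rw [intervalIntegrable_iff_integrableOn_Ioo_of_le zero_le_one]
    exact hi
  have key : ∀ b ∈ Set.Ico (0:ℝ) 1, (∫ z in (0:ℝ)..b, f z) = F b - F 0 := by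
    intro b hb
    refine intervalIntegral.integral_eq_sub_of_hasDerivAt (fun x hx => hd x ?_)
      (hi'.mono_set ?_)
    · rw [Set.uIcc_of_le hb.1] at hx
      exact ⟨hx.1, lt_of_le_of_lt hx.2 hb.2⟩
    · rw [Set.uIcc_of_le hb.1, Set.uIcc_of_le zero_le_one]
      exact Set.Icc_subset_Icc le_rfl hb.2.le
  have hΦ : Tendsto (fun b => ∫ z in (0:ℝ)..b, f z) (𝓝[Set.Ioo (0:ℝ) 1] 1)
      (𝓝 (∫ z in (0:ℝ)..1, f z)) := by
    have hc := intervalIntegral.continuousOn_primitive_interval' hi'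
      (Set.left_mem_uIcc)
    have h1 := hc 1 (Set.right_mem_uIcc)
    refine h1.mono_left (nhdsWithin_mono _ ?_)
    rw [Set.uIcc_of_le zero_le_one]
    exact Set.Ioo_subset_Icc_self
  have hΦ' : Tendsto (fun b => ∫ z in (0:ℝ)..b, f z) (𝓝[Set.Ioo (0:ℝ) 1] 1)
      (𝓝 (L - F 0)) := by
    apply Tendsto.congr' _
      ((hL.mono_left (nhdsWithin_mono _ Set.Ioo_subset_Iio_self)).sub_const (F 0))
    filter_upwards [self_mem_nhdsWithin] with b hb
    exact (key b ⟨hb.1.le, hb.2⟩).symm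
  haveI : (𝓝[Set.Ioo (0:ℝ) 1] (1:ℝ)).NeBot := right_nhdsWithin_Ioo_neBot one_pos
  have h := tendsto_nhds_unique hΦ hΦ'
  rw [intervalIntegral.integral_of_le zero_le_one,
    MeasureTheory.integral_Ioc_eq_integral_Ioo] at h
  exact h

lemma intS : IntegrableOn (fun z : ℝ => 1 / Real.sqrt (1 - z^2)) (Set.Ioo (0:ℝ) 1) := by
  have h := intervalIntegral.integrableOn_deriv_of_nonneg
    (g := Real.arcsin) (g' := fun z : ℝ => 1 / Real.sqrt (1 - z^2)) (a := (0:ℝ)) (b := 1)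
    (Real.continuous_arcsin.continuousOn)
    (fun x hx => Real.hasDerivAt_arcsin (by linarith [hx.1]) (ne_of_lt hx.2))
    (fun x _ => by positivity)
  exact h.mono_set Set.Ioo_subset_Ioc_self

lemma valS : ∫ z in Set.Ioo (0:ℝ) 1, 1 / Real.sqrt (1 - z^2) = π / 2 := by
  have h := ftc01 (fun z : ℝ => 1 / Real.sqrt (1 - z^2)) Real.arcsin (π/2) intS
    (fun x hx => Real.hasDerivAt_arcsin (by linarith [hx.1]) (ne_of_lt hx.2))
    (by
      have : Filter.Tendsto Real.arcsin (𝓝 (1:ℝ)) (𝓝 (Real.arcsin 1)) :=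
        Real.continuous_arcsin.continuousAt
      rw [Real.arcsin_one] at this
      exact this.mono_left nhdsWithin_le_nhds)
  rw [h, Real.arcsin_zero, sub_zero]

lemma derivP {k : ℝ} (hk0 : 0 < k) (hk1 : k < 1) {x : ℝ} (hx : x ∈ Set.Ico (0:ℝ) 1) :
    HasDerivAt (fun z : ℝ => (Real.sqrt (1 - k^2))⁻¹ *
        Real.arctan (Real.sqrt (1 - k^2) * (z / Real.sqrt (1 - z^2))))
      (1 / (Real.sqrt (1 - x^2) * (1 - k^2 * x^2))) x := by
  set c := Real.sqrt (1 - k^2) with hcdef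
  have hk2 : (0:ℝ) < 1 - k^2 := by nlinarith
  have hc0 : 0 < c := Real.sqrt_pos.mpr hk2
  have hc2 : c^2 = 1 - k^2 := Real.sq_sqrt hk2.le
  have hx0 : (0:ℝ) ≤ x := hx.1
  have hx1 : x < 1 := hx.2
  have hA : (0:ℝ) < 1 - x^2 := by nlinarith
  set s := Real.sqrt (1 - x^2) with hsdef
  have hs0 : 0 < s := Real.sqrt_pos.mpr hA
  have hs2 : s^2 = 1 - x^2 := Real.sq_sqrt hA.le
  have hB : (0:ℝ) < 1 - k^2 * x^2 := by nlinarith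
  -- derivative of z ↦ √(1-z²)
  have hsq : HasDerivAt (fun z : ℝ => Real.sqrt (1 - z^2)) (-x / s) x := by
    have h1 : HasDerivAt (fun z : ℝ => 1 - z^2) (-(2*x)) x := by
      simpa using ((hasDerivAt_pow 2 x).const_sub 1)
    have h2 := (Real.hasDerivAt_sqrt (ne_of_gt hA)).comp x h1
    refine h2.congr_deriv ?_
    field_simp
    ring
  -- derivative of z ↦ z / √(1-z²)
  have hu : HasDerivAt (fun z : ℝ => z / Real.sqrt (1 - z^2))
      ((1 * s - x * (-x / s)) / s^2) x := by
    have := (hasDerivAt_id x).div hsq (ne_of_gt hs0)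
    exact this
  -- compose with arctan and multiply
  have hat := ((Real.hasDerivAt_arctan (c * (x / s))).comp x (hu.const_mul c)).const_mul c⁻¹
  refine hat.congr_deriv ?_
  have hden : 1 + (c * (x/s))^2 = (1 - k^2*x^2) / s^2 := by
    field_simp
    nlinarith [hs2, hc2]
  rw [hden]
  field_simp
  linear_combination hs2




lemma integrableOn_of_bound (f g : ℝ → ℝ) (hg : IntegrableOn g (Set.Ioo (0:ℝ) 1))
    (hf : ContinuousOn f (Set.Ioo (0:ℝ) 1))
    (hb : ∀ z ∈ Set.Ioo (0:ℝ) 1, ‖f z‖ ≤ g z) : IntegrableOn f (Set.Ioo (0:ℝ) 1) :=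
  Integrable.mono' hg (hf.aestronglyMeasurable measurableSet_Ioo)
    ((ae_restrict_mem measurableSet_Ioo).mono hb)

lemma contA : Continuous (fun z : ℝ => Real.sqrt (1 - z^2)) :=
  Real.continuous_sqrt.comp (by continuity)

lemma contB (k : ℝ) : Continuous (fun z : ℝ => Real.sqrt (1 - k^2 * z^2)) :=
  Real.continuous_sqrt.comp (by continuity)

lemma hApos {z : ℝ} (hz : z ∈ Set.Ioo (0:ℝ) 1) : 0 < Real.sqrt (1 - z^2) :=
  Real.sqrt_pos.mpr (by nlinarith [hz.1, hz.2])

lemma hupos {k z : ℝ} (hk0 : 0 < k) (hk1 : k < 1) (hz : z ∈ Set.Ioo (0:ℝ) 1) :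
    0 < 1 - k^2 * z^2 := by
  have h1 := hz.1; have h2 := hz.2
  have h3 : k*z < 1*z := mul_lt_mul_of_pos_right hk1 h1
  nlinarith [mul_pos hk0 h1]

lemma intP {k : ℝ} (hk0 : 0 < k) (hk1 : k < 1) :
    IntegrableOn (fun z : ℝ => 1 / (Real.sqrt (1 - z^2) * (1 - k^2 * z^2)))
      (Set.Ioo (0:ℝ) 1) := by
  have hk2 : (0:ℝ) < 1 - k^2 := by nlinarith
  refine integrableOn_of_bound _ (fun z => (1 - k^2)⁻¹ * (1 / Real.sqrt (1 - z^2)))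
    (intS.const_mul _) ?_ ?_
  · refine ContinuousOn.div continuousOn_const
      ((contA.continuousOn).mul (Continuous.continuousOn (by continuity))) ?_
    intro z hz
    exact ne_of_gt (mul_pos (hApos hz) (hupos hk0 hk1 hz))
  · intro z hz
    have hA := hApos hz
    have hu := hupos hk0 hk1 hz
    rw [Real.norm_eq_abs, abs_of_nonneg (le_of_lt (one_div_pos.mpr (mul_pos hA hu)))]
    have h1 : (1 - k^2)⁻¹ * (1 / Real.sqrt (1 - z^2))
        = 1 / (Real.sqrt (1 - z^2) * (1 - k^2)) := by
      field_simp
    show 1 / (Real.sqrt (1 - z^2) * (1 - k^2 * z^2))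
        ≤ (1 - k^2)⁻¹ * (1 / Real.sqrt (1 - z^2))
    rw [h1]
    apply one_div_le_one_div_of_le (mul_pos hA hk2)
    have hz2 : z^2 < 1 := by nlinarith [hz.1, hz.2]
    nlinarith [mul_nonneg hA.le (mul_nonneg (sq_nonneg k) (sub_nonneg.mpr hz2.le))]
lemma valP {k : ℝ} (hk0 : 0 < k) (hk1 : k < 1) :
    ∫ z in Set.Ioo (0:ℝ) 1, 1 / (Real.sqrt (1 - z^2) * (1 - k^2 * z^2))
      = (Real.sqrt (1 - k^2))⁻¹ * (π / 2) := by
  have hk2 : (0:ℝ) < 1 - k^2 := by nlinarith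
  have hc0 : 0 < Real.sqrt (1 - k^2) := Real.sqrt_pos.mpr hk2
  have h1 : Filter.Tendsto (fun z : ℝ => Real.sqrt (1 - z^2)) (𝓝[<] (1:ℝ)) (𝓝[>] 0) := by
    apply tendsto_nhdsWithin_of_tendsto_nhds_of_eventually_within
    · have h := (contA.tendsto 1).mono_left (nhdsWithin_le_nhds (s := Set.Iio (1:ℝ)))
      simpa using h
    · filter_upwards [Ioo_mem_nhdsLT_of_mem (Set.mem_Ioc.mpr ⟨zero_lt_one, le_refl 1⟩)]
        with z hz
      exact hApos hz
  have h2 : Filter.Tendsto (fun z : ℝ => z / Real.sqrt (1 - z^2)) (𝓝[<] (1:ℝ)) atTop := by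
    simp only [div_eq_mul_inv]
    exact Filter.Tendsto.pos_mul_atTop one_pos
      (tendsto_id.mono_left (nhdsWithin_le_nhds)) h1.inv_tendsto_nhdsGT_zero
  have h3 := h2.const_mul_atTop hc0
  have h4 : Filter.Tendsto
      (fun z : ℝ => (Real.sqrt (1 - k^2))⁻¹ *
        Real.arctan (Real.sqrt (1 - k^2) * (z / Real.sqrt (1 - z^2))))
      (𝓝[<] (1:ℝ)) (𝓝 ((Real.sqrt (1 - k^2))⁻¹ * (π / 2))) := by
    apply Filter.Tendsto.const_mul
    exact (Real.tendsto_arctan_atTop.mono_right nhdsWithin_le_nhds).comp h3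
  have h := ftc01 _ _ _ (intP hk0 hk1) (fun x hx => derivP hk0 hk1 hx) h4
  rw [h]
  norm_num


lemma hBpos {k z : ℝ} (hk0 : 0 < k) (hk1 : k < 1) (hz : z ∈ Set.Ioo (0:ℝ) 1) :
    0 < Real.sqrt (1 - k^2 * z^2) := Real.sqrt_pos.mpr (hupos hk0 hk1 hz)

lemma hBgec {k z : ℝ} (hk0 : 0 < k) (hk1 : k < 1) (hz : z ∈ Set.Ioo (0:ℝ) 1) :
    Real.sqrt (1 - k^2) ≤ Real.sqrt (1 - k^2 * z^2) := by
  apply Real.sqrt_le_sqrt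
  have hz2 : z^2 < 1 := by nlinarith [hz.1, hz.2]
  nlinarith [sq_nonneg k, mul_nonneg (sq_nonneg k) (sub_nonneg.mpr hz2.le)]

lemma hBle1 {k z : ℝ} (hk0 : 0 < k) (hk1 : k < 1) (hz : z ∈ Set.Ioo (0:ℝ) 1) :
    Real.sqrt (1 - k^2 * z^2) ≤ 1 := by
  rw [Real.sqrt_le_one]
  nlinarith [mul_pos hk0 hz.1, mul_pos (mul_pos hk0 hz.1) (mul_pos hk0 hz.1)]

lemma intK {k : ℝ} (hk0 : 0 < k) (hk1 : k < 1) :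
    IntegrableOn (fun z : ℝ => 1 / (Real.sqrt (1 - k^2 * z^2) * Real.sqrt (1 - z^2)))
      (Set.Ioo (0:ℝ) 1) := by
  have hk2 : (0:ℝ) < 1 - k^2 := by nlinarith
  have hc0 : 0 < Real.sqrt (1 - k^2) := Real.sqrt_pos.mpr hk2
  refine integrableOn_of_bound _
    (fun z => (Real.sqrt (1 - k^2))⁻¹ * (1 / Real.sqrt (1 - z^2)))
    (intS.const_mul _) ?_ ?_
  · refine ContinuousOn.div continuousOn_const
      (((contB k).continuousOn).mul contA.continuousOn) ?_
    intro z hz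
    exact ne_of_gt (mul_pos (hBpos hk0 hk1 hz) (hApos hz))
  · intro z hz
    have hA := hApos hz
    have hB := hBpos hk0 hk1 hz
    rw [Real.norm_eq_abs, abs_of_nonneg (le_of_lt (one_div_pos.mpr (mul_pos hB hA)))]
    have h1 : (Real.sqrt (1 - k^2))⁻¹ * (1 / Real.sqrt (1 - z^2))
        = 1 / (Real.sqrt (1 - k^2) * Real.sqrt (1 - z^2)) := by
      field_simp
    show 1 / (Real.sqrt (1 - k^2 * z^2) * Real.sqrt (1 - z^2))
        ≤ (Real.sqrt (1 - k^2))⁻¹ * (1 / Real.sqrt (1 - z^2))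
    rw [h1]
    apply one_div_le_one_div_of_le (mul_pos hc0 hA)
    exact mul_le_mul_of_nonneg_right (hBgec hk0 hk1 hz) hA.le

lemma intE {k : ℝ} (hk0 : 0 < k) (hk1 : k < 1) :
    IntegrableOn (fun z : ℝ => Real.sqrt (1 - k^2 * z^2) / Real.sqrt (1 - z^2))
      (Set.Ioo (0:ℝ) 1) := by
  refine integrableOn_of_bound _ (fun z => 1 / Real.sqrt (1 - z^2)) intS ?_ ?_
  · refine ContinuousOn.div ((contB k).continuousOn) contA.continuousOn ?_
    intro z hz
    exact ne_of_gt (hApos hz)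
  · intro z hz
    have hA := hApos hz
    rw [Real.norm_eq_abs, abs_of_nonneg (by positivity)]
    exact (div_le_div_iff_of_pos_right hA).mpr (hBle1 hk0 hk1 hz)



theorem stmt_5 (k : ℝ) (hk0 : 0 < k) (hk1 : k < 1) :
    Eell k / Kell k > Real.sqrt (1 - k ^ 2) := by
  have hk2 : (0:ℝ) < 1 - k^2 := by nlinarith
  have hc0 : 0 < Real.sqrt (1 - k^2) := Real.sqrt_pos.mpr hk2
  set c : ℝ := Real.sqrt (1 - k^2) with hcdef
  have hπ : (0:ℝ) < π/2 := by positivity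
  have hKdef : Kell k = ∫ z in Set.Ioo (0:ℝ) 1,
      1 / (Real.sqrt (1 - k^2 * z^2) * Real.sqrt (1 - z^2)) := by
    rw [Kell, intervalIntegral.integral_of_le zero_le_one,
      MeasureTheory.integral_Ioc_eq_integral_Ioo]
  have hEdef : Eell k = ∫ z in Set.Ioo (0:ℝ) 1,
      Real.sqrt (1 - k^2 * z^2) / Real.sqrt (1 - z^2) := by
    rw [Eell, intervalIntegral.integral_of_le zero_le_one,
      MeasureTheory.integral_Ioc_eq_integral_Ioo]
  set K : ℝ := Kell k with hKK
  set E : ℝ := Eell k with hEE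
  have hvolIoo : (volume (Set.Ioo (0:ℝ) 1)) = 1 := by simp
  -- K is positive
  have hK0 : 0 < K := by
    rw [hKdef]
    rw [setIntegral_pos_iff_support_of_nonneg_ae ?_ (intK hk0 hk1)]
    · have hsub : Set.Ioo (0:ℝ) 1 ⊆ Function.support
          (fun z : ℝ => 1 / (Real.sqrt (1 - k^2 * z^2) * Real.sqrt (1 - z^2)))
            ∩ Set.Ioo (0:ℝ) 1 := by
        intro z hz
        refine ⟨?_, hz⟩
        have := one_div_pos.mpr (mul_pos (hBpos hk0 hk1 hz) (hApos hz))
        exact ne_of_gt this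
      calc (0:ENNReal) < 1 := by norm_num
        _ = volume (Set.Ioo (0:ℝ) 1) := hvolIoo.symm
        _ ≤ _ := measure_mono hsub
    · filter_upwards [ae_restrict_mem measurableSet_Ioo] with z hz
      exact le_of_lt (one_div_pos.mpr (mul_pos (hBpos hk0 hk1 hz) (hApos hz)))
  -- the value of the P integral
  set P : ℝ := c⁻¹ * (π/2) with hPdef
  have hP0 : 0 < P := by positivity
  -- Cauchy–Schwarz I (strict): K^2 < (π/2) * P
  have CS1 : K^2 < (π/2) * P := by
    obtain ⟨t, htdef⟩ : ∃ t : ℝ, t = K / P := ⟨_, rfl⟩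
    have ht0 : 0 < t := htdef ▸ div_pos hK0 hP0
    set h : ℝ → ℝ := fun z =>
      (1 / Real.sqrt (Real.sqrt (1 - z^2))
        - t * (1 / (Real.sqrt (Real.sqrt (1 - z^2)) * Real.sqrt (1 - k^2 * z^2))))^2
      with hhdef
    have hEqOn : ∀ z ∈ Set.Ioo (0:ℝ) 1, h z
        = 1 / Real.sqrt (1 - z^2)
          - (2*t) * (1 / (Real.sqrt (1 - k^2 * z^2) * Real.sqrt (1 - z^2)))
          + t^2 * (1 / (Real.sqrt (1 - z^2) * (1 - k^2 * z^2))) := by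
      intro z hz
      have hA := hApos hz
      have hB := hBpos hk0 hk1 hz
      have hsa0 : 0 < Real.sqrt (Real.sqrt (1 - z^2)) := Real.sqrt_pos.mpr hA
      have hsa : Real.sqrt (Real.sqrt (1 - z^2)) ^ 2 = Real.sqrt (1 - z^2) :=
        Real.sq_sqrt (Real.sqrt_nonneg _)
      have hsb : Real.sqrt (1 - k^2 * z^2) ^ 2 = 1 - k^2 * z^2 :=
        Real.sq_sqrt (hupos hk0 hk1 hz).le
      rw [hhdef]
      rw [← hsa, ← hsb]
      field_simp
      ring_nf
      rw [Real.sq_sqrt (by nlinarith [hupos hk0 hk1 hz] : (0:ℝ) ≤ 1 - z^2*k^2)]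
    have i1 : IntegrableOn (fun z : ℝ => 1 / Real.sqrt (1 - z^2)
        - (2*t) * (1 / (Real.sqrt (1 - k^2 * z^2) * Real.sqrt (1 - z^2))))
        (Set.Ioo (0:ℝ) 1) := intS.sub ((intK hk0 hk1).const_mul (2*t))
    have i2 : IntegrableOn (fun z : ℝ => t^2 * (1 / (Real.sqrt (1 - z^2) * (1 - k^2 * z^2))))
        (Set.Ioo (0:ℝ) 1) := (intP hk0 hk1).const_mul (t^2)
    have i3 : IntegrableOn (fun z : ℝ => 1 / Real.sqrt (1 - z^2)
        - (2*t) * (1 / (Real.sqrt (1 - k^2 * z^2) * Real.sqrt (1 - z^2)))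
        + t^2 * (1 / (Real.sqrt (1 - z^2) * (1 - k^2 * z^2))))
        (Set.Ioo (0:ℝ) 1) := i1.add i2
    have hintH : IntegrableOn h (Set.Ioo (0:ℝ) 1) :=
      i3.congr_fun (fun z hz => (hEqOn z hz).symm) measurableSet_Ioo
    have hIH : ∫ z in Set.Ioo (0:ℝ) 1, h z = π/2 - (2*t)*K + t^2*P := by
      rw [setIntegral_congr_fun measurableSet_Ioo (fun z hz => hEqOn z hz)]
      rw [MeasureTheory.integral_add i1 i2,
        MeasureTheory.integral_sub intS ((intK hk0 hk1).const_mul (2*t)),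
        MeasureTheory.integral_const_mul, MeasureTheory.integral_const_mul]
      rw [valS, valP hk0 hk1, ← hKdef, hPdef]
    -- the integral of h is strictly positive
    have hpos : 0 < ∫ z in Set.Ioo (0:ℝ) 1, h z := by
      rw [setIntegral_pos_iff_support_of_nonneg_ae
        (Filter.Eventually.of_forall (fun z => sq_nonneg _)) hintH]
      set z₀ : ℝ := Real.sqrt ((1 - t^2) / k^2) with hz₀
      have hsub : Set.Ioo (0:ℝ) 1 ⊆ (Function.support h ∩ Set.Ioo (0:ℝ) 1) ∪ {z₀} := by
        intro z hz
        by_cases hzz : h z = 0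
        · right
          have hA := hApos hz
          have hB := hBpos hk0 hk1 hz
          have hsa0 : 0 < Real.sqrt (Real.sqrt (1 - z^2)) := Real.sqrt_pos.mpr hA
          rw [hhdef] at hzz
          have h1 : 1 / Real.sqrt (Real.sqrt (1 - z^2))
              = t * (1 / (Real.sqrt (Real.sqrt (1 - z^2)) * Real.sqrt (1 - k^2 * z^2))) := by
            have := pow_eq_zero_iff (n := 2) (by norm_num) |>.mp hzz
            linarith [sub_eq_zero.mp this]
          have hBt : Real.sqrt (1 - k^2 * z^2) = t := by
            field_simp at h1
            rw [mul_comm (z^2), eq_div_iff hB.ne', one_mul] at h1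
            linarith
          have hzsq : z^2 = (1 - t^2) / k^2 := by
            have h2 : t^2 = 1 - k^2 * z^2 := by
              rw [← hBt, Real.sq_sqrt (hupos hk0 hk1 hz).le]
            field_simp
            linarith
          have : z = z₀ := by
            rw [hz₀, ← hzsq, Real.sqrt_sq hz.1.le]
          simp [this]
        · exact Or.inl ⟨hzz, hz⟩
      have h1 : volume (Set.Ioo (0:ℝ) 1)
          ≤ volume (Function.support h ∩ Set.Ioo (0:ℝ) 1) + volume ({z₀} : Set ℝ) :=
        le_trans (measure_mono hsub) (measure_union_le _ _)
      rw [measure_singleton, add_zero, hvolIoo] at h1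
      exact lt_of_lt_of_le (by norm_num) h1
    rw [hIH] at hpos
    have htP : t * P = K := by rw [htdef]; exact div_mul_cancel₀ _ (ne_of_gt hP0)
    have h2 : t * K < π/2 := by
      have hq : t^2 * P = t * K := by rw [← htP]; ring
      linarith [hpos, hq]
    calc K^2 = (t*K) * P := by rw [← htP]; ring
      _ < (π/2) * P := by exact mul_lt_mul_of_pos_right h2 hP0
  -- Cauchy–Schwarz II: (π/2)^2 / K ≤ E
  have CS2 : (π/2) * (π/2) / K ≤ E := by
    obtain ⟨t, htdef⟩ : ∃ t : ℝ, t = (π/2) / K := ⟨_, rfl⟩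
    set h : ℝ → ℝ := fun z =>
      (Real.sqrt (Real.sqrt (1 - k^2 * z^2)) / Real.sqrt (Real.sqrt (1 - z^2))
        - t * (1 / (Real.sqrt (Real.sqrt (1 - k^2 * z^2))
            * Real.sqrt (Real.sqrt (1 - z^2)))))^2 with hhdef
    have hEqOn : ∀ z ∈ Set.Ioo (0:ℝ) 1, h z
        = Real.sqrt (1 - k^2 * z^2) / Real.sqrt (1 - z^2)
          - (2*t) * (1 / Real.sqrt (1 - z^2))
          + t^2 * (1 / (Real.sqrt (1 - k^2 * z^2) * Real.sqrt (1 - z^2))) := by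
      intro z hz
      have hA := hApos hz
      have hB := hBpos hk0 hk1 hz
      have hsa0 : 0 < Real.sqrt (Real.sqrt (1 - z^2)) := Real.sqrt_pos.mpr hA
      have hsb0 : 0 < Real.sqrt (Real.sqrt (1 - k^2 * z^2)) := Real.sqrt_pos.mpr hB
      have hsa : Real.sqrt (Real.sqrt (1 - z^2)) ^ 2 = Real.sqrt (1 - z^2) :=
        Real.sq_sqrt (Real.sqrt_nonneg _)
      have hsb : Real.sqrt (Real.sqrt (1 - k^2 * z^2)) ^ 2 = Real.sqrt (1 - k^2 * z^2) :=
        Real.sq_sqrt (Real.sqrt_nonneg _)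
      rw [hhdef]
      have hsa4 : Real.sqrt (Real.sqrt (1 - z^2)) ^ 4 = Real.sqrt (1 - z^2) ^ 2 := by
        rw [show 4 = 2*2 from rfl, pow_mul, hsa]
      have hsb4 : Real.sqrt (Real.sqrt (1 - k^2 * z^2)) ^ 4
          = Real.sqrt (1 - k^2 * z^2) ^ 2 := by
        rw [show 4 = 2*2 from rfl, pow_mul, hsb]
      rw [← hsa, ← hsb]
      field_simp
      ring_nf
    have hIH : ∫ z in Set.Ioo (0:ℝ) 1, h z = E - (2*t)*(π/2) + t^2*K := by
      have i1 : IntegrableOn (fun z : ℝ => Real.sqrt (1 - k^2 * z^2) / Real.sqrt (1 - z^2)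
          - (2*t) * (1 / Real.sqrt (1 - z^2))) (Set.Ioo (0:ℝ) 1) :=
        (intE hk0 hk1).sub (intS.const_mul (2*t))
      have i2 : IntegrableOn (fun z : ℝ =>
          t^2 * (1 / (Real.sqrt (1 - k^2 * z^2) * Real.sqrt (1 - z^2))))
          (Set.Ioo (0:ℝ) 1) := (intK hk0 hk1).const_mul (t^2)
      rw [setIntegral_congr_fun measurableSet_Ioo (fun z hz => hEqOn z hz)]
      rw [MeasureTheory.integral_add i1 i2,
        MeasureTheory.integral_sub (intE hk0 hk1) (intS.const_mul (2*t)),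
        MeasureTheory.integral_const_mul, MeasureTheory.integral_const_mul]
      rw [valS, ← hKdef, ← hEdef]
    have hpos : 0 ≤ ∫ z in Set.Ioo (0:ℝ) 1, h z :=
      setIntegral_nonneg measurableSet_Ioo (fun z _ => sq_nonneg _)
    rw [hIH] at hpos
    have htK : t * K = π/2 := by rw [htdef]; exact div_mul_cancel₀ _ (ne_of_gt hK0)
    have h2 : t * (π/2) ≤ E := by
      have hq : t^2 * K = t * (π/2) := by rw [← htK]; ring
      linarith [hpos, hq]
    calc (π/2) * (π/2) / K = t * (π/2) := by rw [htdef]; ring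
      _ ≤ E := h2
  -- conclude
  rw [gt_iff_lt, lt_div_iff₀ hK0]
  have hcK : c * K * K < (π/2) * (π/2) := by
    have h4 := mul_lt_mul_of_pos_left CS1 hc0
    have hcP : c * ((π/2) * P) = (π/2) * (π/2) := by
      rw [hPdef]
      field_simp
    calc c * K * K = c * K^2 := by ring
      _ < c * ((π/2) * P) := h4
      _ = (π/2) * (π/2) := hcP
  have h3 : c * K < (π/2) * (π/2) / K := by
    rw [lt_div_iff₀ hK0]
    calc c * K * K = c * K * K := rfl
      _ < (π/2) * (π/2) := hcK
  exact lt_of_lt_of_le h3 CS2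
end

section
/- (Gauss) For 0 < α ≤ β, the integral I(α,β) = ∫_0^{π/2} dθ/√(α² cos²θ + β² sin²θ) satisfies I(α,β) = I((α+β)/2, √(αβ)), and consequently I(α,β) = π/(2 M(α,β)) where M(α,β) is the arithmetic-geometric mean of α and β. -/
/-!
The substitution `x = b tan θ` turns `I(a, b)` into
`J(a, b) = ∫₀^∞ dx / √((x² + a²)(x² + b²))`. Landen's substitution `t = (x - ab/x) / 2`
maps `(0, ∞)` increasingly onto `ℝ`, with `dt = (x² + ab)/(2x²) dx`, and carries
`J((a+b)/2, √(ab))`, written as half the integral of an even function over `ℝ`, to `J(a, b)`.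
Hence `I` is constant along the AGM iteration. Since `a ≤ √(a² cos²θ + b² sin²θ) ≤ b`, we have
`π/(2b) ≤ I(a, b) ≤ π/(2a)`, so `π/(2Bₙ) ≤ I(α, β) ≤ π/(2Aₙ)`, and both bounds tend to
`π/(2M)`.
-/

open Filter Topology

/-- The integral `I(α,β) = ∫_0^{π/2} dθ/√(α² cos²θ + β² sin²θ)`. -/
noncomputable def Iint (α β : ℝ) : ℝ :=
  ∫ θ in (0:ℝ)..(Real.pi / 2),
    1 / Real.sqrt (α ^ 2 * Real.cos θ ^ 2 + β ^ 2 * Real.sin θ ^ 2)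

open Set MeasureTheory Real

noncomputable def Jint (a b : ℝ) : ℝ :=
  ∫ x in Ioi (0 : ℝ), 1 / √((x ^ 2 + a ^ 2) * (x ^ 2 + b ^ 2))

lemma Iint_comm (a b : ℝ) : Iint a b = Iint b a := by
  have h := intervalIntegral.integral_comp_sub_left (a := 0) (b := π / 2)
    (fun θ => 1 / √(b ^ 2 * cos θ ^ 2 + a ^ 2 * sin θ ^ 2)) (π / 2)
  simp only [cos_pi_div_two_sub, sin_pi_div_two_sub, sub_zero, sub_self] at h
  simpa only [Iint, add_comm] using h

lemma image_const_mul_tan_Ioo {b : ℝ} (hb : 0 < b) :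
    (fun θ => b * tan θ) '' Ioo 0 (π / 2) = Ioi 0 := by
  ext y
  constructor
  · rintro ⟨θ, ⟨h0, hπ⟩, rfl⟩
    exact mul_pos hb (tan_pos_of_pos_of_lt_pi_div_two h0 hπ)
  · intro hy
    refine ⟨arctan (y / b), ⟨?_, arctan_lt_pi_div_two _⟩, ?_⟩
    · simpa using arctan_strictMono (div_pos hy hb)
    · simp only [tan_arctan]
      field_simp

lemma injOn_const_mul_tan_Ioo {b : ℝ} (hb : b ≠ 0) :
    InjOn (fun θ => b * tan θ) (Ioo 0 (π / 2)) := by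
  have hsub : Ioo 0 (π / 2) ⊆ Ioo (-(π / 2)) (π / 2) :=
    Ioo_subset_Ioo_left (by linarith [pi_pos])
  exact fun x hx y hy hxy => injOn_tan (hsub hx) (hsub hy) (mul_left_cancel₀ hb hxy)

lemma hasDerivAt_const_mul_tan {θ : ℝ} (b : ℝ) (hθ : cos θ ≠ 0) :
    HasDerivAt (fun θ => b * tan θ) (b / cos θ ^ 2) θ := by
  simpa [div_eq_mul_inv] using (hasDerivAt_tan hθ).const_mul b

lemma tan_substitution_integrand {a b θ : ℝ} (ha : 0 < a) (hb : 0 < b) (hθ : 0 < cos θ) :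
    b / cos θ ^ 2 * (1 / √(((b * tan θ) ^ 2 + a ^ 2) * ((b * tan θ) ^ 2 + b ^ 2))) =
      1 / √(a ^ 2 * cos θ ^ 2 + b ^ 2 * sin θ ^ 2) := by
  have hQ : 0 < a ^ 2 * cos θ ^ 2 + b ^ 2 * sin θ ^ 2 := by positivity
  have hprod : ((b * tan θ) ^ 2 + a ^ 2) * ((b * tan θ) ^ 2 + b ^ 2) =
      (b / cos θ ^ 2) ^ 2 * (a ^ 2 * cos θ ^ 2 + b ^ 2 * sin θ ^ 2) := by
    rw [tan_eq_sin_div_cos]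
    field_simp
    linear_combination (a ^ 2 * cos θ ^ 2 + b ^ 2 * sin θ ^ 2) * sin_sq_add_cos_sq θ
  rw [hprod, sqrt_mul (sq_nonneg _), sqrt_sq (by positivity)]
  have := sqrt_pos.2 hQ
  field_simp

lemma Iint_eq_Jint {a b : ℝ} (ha : 0 < a) (hb : 0 < b) : Iint a b = Jint a b := by
  have hcos : ∀ θ ∈ Ioo 0 (π / 2), 0 < cos θ := fun θ hθ =>
    cos_pos_of_mem_Ioo ⟨by linarith [hθ.1, pi_pos], hθ.2⟩
  have key := integral_image_eq_integral_abs_deriv_smul measurableSet_Ioo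
    (fun θ hθ => (hasDerivAt_const_mul_tan b (hcos θ hθ).ne').hasDerivWithinAt)
    (injOn_const_mul_tan_Ioo hb.ne') (fun x => 1 / √((x ^ 2 + a ^ 2) * (x ^ 2 + b ^ 2)))
  rw [image_const_mul_tan_Ioo hb] at key
  rw [Jint, key, Iint, intervalIntegral.integral_of_le (by positivity),
    integral_Ioc_eq_integral_Ioo]
  refine setIntegral_congr_fun measurableSet_Ioo fun θ hθ => ?_
  have hθ := hcos θ hθ
  rw [smul_eq_mul, abs_of_pos (by positivity), tan_substitution_integrand ha hb hθ]

lemma image_landen_Ioi {c : ℝ} (hc : 0 < c) : (fun x => (x - c / x) / 2) '' Ioi 0 = univ := by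
  refine eq_univ_of_forall fun t => ?_
  have hs : √(t ^ 2 + c) ^ 2 = t ^ 2 + c := sq_sqrt (by positivity)
  have hpos : 0 < t + √(t ^ 2 + c) := by
    have : |t| < √(t ^ 2 + c) := by
      rw [← sqrt_sq_eq_abs]; exact sqrt_lt_sqrt (sq_nonneg t) (by linarith)
    linarith [neg_abs_le t]
  refine ⟨t + √(t ^ 2 + c), hpos, ?_⟩
  field_simp
  linear_combination hs

lemma strictMonoOn_landen {c : ℝ} (hc : 0 < c) :
    StrictMonoOn (fun x => (x - c / x) / 2) (Ioi 0) := fun x hx y _ hxy => by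
  have : c / y < c / x := div_lt_div_of_pos_left hc hx hxy
  simp only
  linarith

lemma hasDerivAt_landen (c : ℝ) {x : ℝ} (hx : x ≠ 0) :
    HasDerivAt (fun x => (x - c / x) / 2) ((1 + c / x ^ 2) / 2) x := by
  have h : HasDerivAt (fun x => (x - c / x) / 2) ((1 - c * -(x ^ 2)⁻¹) / 2) x := by
    simpa [div_eq_mul_inv] using
      ((hasDerivAt_id x).sub ((hasDerivAt_inv hx).const_mul c)).div_const 2
  exact h.congr_deriv (by ring)

lemma landen_substitution_integrand {a b x t : ℝ} (ha : 0 < a) (hb : 0 < b) (hx : 0 < x)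
    (ht : t = (x - a * b / x) / 2) :
    (1 + a * b / x ^ 2) / 2 * (1 / √((t ^ 2 + ((a + b) / 2) ^ 2) * (t ^ 2 + a * b))) =
      2 * (1 / √((x ^ 2 + a ^ 2) * (x ^ 2 + b ^ 2))) := by
  have hprod : (t ^ 2 + ((a + b) / 2) ^ 2) * (t ^ 2 + a * b) =
      ((x ^ 2 + a * b) / (4 * x ^ 2)) ^ 2 * ((x ^ 2 + a ^ 2) * (x ^ 2 + b ^ 2)) := by
    subst ht
    field_simp
    ring
  rw [hprod, sqrt_mul (sq_nonneg _), sqrt_sq (by positivity)]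
  have : 0 < √((x ^ 2 + a ^ 2) * (x ^ 2 + b ^ 2)) := sqrt_pos.2 (by positivity)
  field_simp
  ring

lemma Jint_agm_step {a b : ℝ} (ha : 0 < a) (hb : 0 < b) :
    Jint a b = Jint ((a + b) / 2) √(a * b) := by
  have hab := mul_pos ha hb
  set g : ℝ → ℝ := fun t => 1 / √((t ^ 2 + ((a + b) / 2) ^ 2) * (t ^ 2 + a * b))
  have key := integral_image_eq_integral_abs_deriv_smul measurableSet_Ioi
    (fun x hx => (hasDerivAt_landen (a * b) (ne_of_gt hx)).hasDerivWithinAt)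
    (strictMonoOn_landen hab).injOn g
  rw [image_landen_Ioi hab, setIntegral_univ] at key
  have heven : ∫ t, g t = 2 * Jint ((a + b) / 2) √(a * b) := by
    rw [Jint, ← integral_comp_abs]
    simp only [g, sq_abs, sq_sqrt hab.le]
  have hsubst :
      ∫ x in Ioi 0, |(1 + a * b / x ^ 2) / 2| • g ((x - a * b / x) / 2) = 2 * Jint a b := by
    rw [Jint, ← integral_const_mul]
    refine setIntegral_congr_fun measurableSet_Ioi fun x hx => ?_
    have hx : (0 : ℝ) < x := hx
    rw [smul_eq_mul, abs_of_pos (by positivity), landen_substitution_integrand ha hb hx rfl]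
  linarith

lemma Iint_agm_step {a b : ℝ} (ha : 0 < a) (hb : 0 < b) :
    Iint a b = Iint ((a + b) / 2) √(a * b) := by
  have hab := mul_pos ha hb
  rw [Iint_eq_Jint ha hb, Jint_agm_step ha hb, Iint_eq_Jint (by positivity) (sqrt_pos.2 hab)]

lemma sqrt_quadForm_mem_Icc {a b : ℝ} (ha : 0 ≤ a) (hab : a ≤ b) (θ : ℝ) :
    √(a ^ 2 * cos θ ^ 2 + b ^ 2 * sin θ ^ 2) ∈ Icc a b := by
  have hsq : a ^ 2 ≤ b ^ 2 := pow_le_pow_left₀ ha hab 2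
  have hsc := sin_sq_add_cos_sq θ
  constructor
  · exact le_sqrt_of_sq_le (by nlinarith [sq_nonneg (sin θ)])
  · exact (sqrt_le_left (ha.trans hab)).2 (by nlinarith [sq_nonneg (cos θ)])

lemma Iint_mem_Icc {a b : ℝ} (ha : 0 < a) (hab : a ≤ b) :
    Iint a b ∈ Icc (π / (2 * b)) (π / (2 * a)) := by
  have hbound := sqrt_quadForm_mem_Icc ha.le hab
  have hcont : Continuous fun θ => 1 / √(a ^ 2 * cos θ ^ 2 + b ^ 2 * sin θ ^ 2) :=
    continuous_const.div (by fun_prop) fun θ => (ha.trans_le (hbound θ).1).ne'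
  have hint := hcont.intervalIntegrable (μ := volume) 0 (π / 2)
  have hπ : (0 : ℝ) ≤ π / 2 := by positivity
  have hconst (c : ℝ) : ∫ _ in (0 : ℝ)..π / 2, c = π / 2 * c := by simp
  constructor
  · calc π / (2 * b) = ∫ _ in (0 : ℝ)..π / 2, 1 / b := by rw [hconst]; ring
      _ ≤ Iint a b := intervalIntegral.integral_mono_on hπ intervalIntegrable_const hint
          fun θ _ => one_div_le_one_div_of_le (ha.trans_le (hbound θ).1) (hbound θ).2
  · calc Iint a b ≤ ∫ _ in (0 : ℝ)..π / 2, 1 / a :=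
          intervalIntegral.integral_mono_on hπ hint intervalIntegrable_const
            fun θ _ => one_div_le_one_div_of_le ha (hbound θ).1
      _ = π / (2 * a) := by rw [hconst]; ring

lemma sqrt_mul_le_add_div_two {a b : ℝ} (ha : 0 ≤ a) (hb : 0 ≤ b) :
    √(a * b) ≤ (a + b) / 2 :=
  (sqrt_le_left (by positivity)).2 (by nlinarith [sq_nonneg (a - b)])

lemma le_sqrt_mul_of_le {a b : ℝ} (ha : 0 ≤ a) (hab : a ≤ b) : a ≤ √(a * b) :=
  le_sqrt_of_sq_le (by nlinarith)

section AGMSequence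

variable {A B : ℕ → ℝ}

lemma agm_seq_pos_le (hA : ∀ n, A (n + 1) = √(A n * B n))
    (hB : ∀ n, B (n + 1) = (A n + B n) / 2)
    (h0 : 0 < A 0) (h0B : A 0 ≤ B 0) (n : ℕ) : 0 < A n ∧ A n ≤ B n := by
  induction n with
  | zero => exact ⟨h0, h0B⟩
  | succ n ih =>
    obtain ⟨hpos, hle⟩ := ih
    rw [hA, hB]
    exact ⟨sqrt_pos.2 (mul_pos hpos (hpos.trans_le hle)),
      sqrt_mul_le_add_div_two hpos.le (hpos.le.trans hle)⟩

lemma agm_seq_monotone (hA : ∀ n, A (n + 1) = √(A n * B n))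
    (hB : ∀ n, B (n + 1) = (A n + B n) / 2) (h0 : 0 < A 0) (h0B : A 0 ≤ B 0) : Monotone A :=
  monotone_nat_of_le_succ fun n => by
    obtain ⟨hpos, hle⟩ := agm_seq_pos_le hA hB h0 h0B n
    exact hA n ▸ le_sqrt_mul_of_le hpos.le hle

lemma Iint_agm_seq (hA : ∀ n, A (n + 1) = √(A n * B n))
    (hB : ∀ n, B (n + 1) = (A n + B n) / 2)
    (h0 : 0 < A 0) (h0B : A 0 ≤ B 0) (n : ℕ) : Iint (A n) (B n) = Iint (A 0) (B 0) := by
  induction n with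
  | zero => rfl
  | succ n ih =>
    obtain ⟨hpos, hle⟩ := agm_seq_pos_le hA hB h0 h0B n
    rw [hA, hB, Iint_comm, ← Iint_agm_step hpos (hpos.trans_le hle), ih]

end AGMSequence

theorem stmt_7 (α β : ℝ) (hα : 0 < α) (hαβ : α ≤ β)
    (A B : ℕ → ℝ) (hA0 : A 0 = α) (hB0 : B 0 = β)
    (hA : ∀ n, A (n + 1) = Real.sqrt (A n * B n))
    (hB : ∀ n, B (n + 1) = (A n + B n) / 2)
    (M : ℝ) (hMA : Tendsto A atTop (𝓝 M)) (hMB : Tendsto B atTop (𝓝 M)) :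
    Iint α β = Iint ((α + β) / 2) (Real.sqrt (α * β)) ∧
    Iint α β = Real.pi / (2 * M) := by
  subst hA0 hB0
  have hM : 0 < M := hα.trans_le ((agm_seq_monotone hA hB hα hαβ).ge_of_tendsto hMA 0)
  have hbounds (n : ℕ) : Iint (A 0) (B 0) ∈ Icc (π / (2 * B n)) (π / (2 * A n)) := by
    obtain ⟨hpos, hle⟩ := agm_seq_pos_le hA hB hα hαβ n
    exact Iint_agm_seq hA hB hα hαβ n ▸ Iint_mem_Icc hpos hle
  have hlim {C : ℕ → ℝ} (hC : Tendsto C atTop (𝓝 M)) :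
      Tendsto (fun n => π / (2 * C n)) atTop (𝓝 (π / (2 * M))) :=
    tendsto_const_nhds.div (tendsto_const_nhds.mul hC) (by positivity)
  refine ⟨Iint_agm_step hα (hα.trans_le hαβ), le_antisymm ?_ ?_⟩
  · exact ge_of_tendsto' (hlim hMA) fun n => (hbounds n).2
  · exact le_of_tendsto' (hlim hMB) fun n => (hbounds n).1
end

section
/- Let c < b < a and p(z) = (z-a)(z-b)(z-c), and for k = 0,1 let J_k(a,b,c) = -∫_c^b z^k dz/√|p(z)|. Then (d/db) J_0 = -(J_1 - b J_0)/(2(a-b)(b-c)) and (d/db) J_1 = (1/2) J_0 + b (d/db) J_0. -/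
/-- `J_0` as a function of the right endpoint `b`. -/
noncomputable def J0f (a c b : ℝ) : ℝ :=
  -∫ z in c..b, 1 / Real.sqrt ((a - z) * (b - z) * (z - c))

/-- `J_1` as a function of the right endpoint `b`. -/
noncomputable def J1f (a c b : ℝ) : ℝ :=
  -∫ z in c..b, z / Real.sqrt ((a - z) * (b - z) * (z - c))

open Real MeasureTheory Set intervalIntegral Metric


lemma cov_lemma (a c : ℝ) (h : ℝ → ℝ) {x : ℝ} (hcx : c < x) (hxa : x < a) :
    ∫ z in c..x, h z / Real.sqrt ((a - z) * (x - z) * (z - c))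
      = ∫ θ in (0:ℝ)..(π/2),
          2 * h (c + (x - c) * Real.sin θ ^ 2) / Real.sqrt (a - c - (x - c) * Real.sin θ ^ 2) := by
  have hxc : (0:ℝ) < x - c := by linarith
  set f : ℝ → ℝ := fun θ => c + (x - c) * Real.sin θ ^ 2 with hf
  have hder : ∀ θ : ℝ, HasDerivAt f ((x - c) * (2 * Real.sin θ * Real.cos θ)) θ := by
    intro θ
    have h1 : HasDerivAt (fun θ : ℝ => Real.sin θ ^ 2) (2 * Real.sin θ * Real.cos θ) θ := by
      simpa [mul_comm, mul_assoc, pow_two] using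
        ((Real.hasDerivAt_sin θ).fun_pow 2)
    simpa [hf, mul_comm, mul_left_comm, mul_assoc] using (h1.const_mul (x - c)).const_add c
  have hmono : StrictMonoOn f (Icc 0 (π/2)) := by
    apply strictMonoOn_of_deriv_pos (convex_Icc _ _)
    · exact (Continuous.continuousOn (by fun_prop))
    · intro θ hθ
      rw [interior_Icc] at hθ
      rw [(hder θ).deriv]
      have hs : 0 < Real.sin θ := Real.sin_pos_of_pos_of_lt_pi hθ.1
        (lt_trans hθ.2 (by linarith [Real.pi_pos]))
      have hc2 : 0 < Real.cos θ := Real.cos_pos_of_mem_Ioo ⟨by linarith [Real.pi_pos, hθ.1], hθ.2⟩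
      positivity
  have himg : f '' Ioo 0 (π/2) = Ioo c x := by
    ext z
    constructor
    · rintro ⟨θ, hθ, rfl⟩
      have hs : 0 < Real.sin θ := Real.sin_pos_of_pos_of_lt_pi hθ.1
        (lt_trans hθ.2 (by linarith [Real.pi_pos]))
      have hc2 : 0 < Real.cos θ := Real.cos_pos_of_mem_Ioo ⟨by linarith [Real.pi_pos, hθ.1], hθ.2⟩
      have hst : Real.sin θ ^ 2 < 1 := by nlinarith [Real.sin_sq_add_cos_sq θ]
      have hsp : 0 < (x - c) * Real.sin θ ^ 2 := by positivity
      constructor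
      · simp only [hf]; nlinarith
      · simp only [hf]; nlinarith
    · intro hz
      obtain ⟨hz1, hz2⟩ := hz
      have ht0 : 0 < (z - c) / (x - c) := by
        apply div_pos (by linarith) hxc
      have ht1 : (z - c) / (x - c) < 1 := by
        rw [div_lt_one hxc]; linarith
      set t := (z - c) / (x - c) with htdef
      refine ⟨Real.arcsin (Real.sqrt t), ?_, ?_⟩
      · constructor
        · exact Real.arcsin_pos.2 (Real.sqrt_pos.2 ht0)
        · exact Real.arcsin_lt_pi_div_two.2 (by
            rw [show (1:ℝ) = Real.sqrt 1 by simp]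
            exact Real.sqrt_lt_sqrt ht0.le ht1)
      · have hsq : Real.sin (Real.arcsin (Real.sqrt t)) = Real.sqrt t := by
          apply Real.sin_arcsin (by linarith [Real.sqrt_nonneg t])
          rw [show (1:ℝ) = Real.sqrt 1 by simp]
          exact Real.sqrt_le_sqrt ht1.le
        simp only [hf, hsq]
        rw [Real.sq_sqrt ht0.le, htdef]
        field_simp
        ring
  have hIcc : ∀ θ ∈ Ioo (0:ℝ) (π/2), 0 < Real.sin θ ∧ 0 < Real.cos θ := by
    intro θ hθ
    exact ⟨Real.sin_pos_of_pos_of_lt_pi hθ.1 (lt_trans hθ.2 (by linarith [Real.pi_pos])),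
      Real.cos_pos_of_mem_Ioo ⟨by linarith [Real.pi_pos, hθ.1], hθ.2⟩⟩
  rw [intervalIntegral.integral_of_le hcx.le, MeasureTheory.integral_Ioc_eq_integral_Ioo,
    ← himg,
    MeasureTheory.integral_image_eq_integral_abs_deriv_smul measurableSet_Ioo
      (fun θ _ => (hder θ).hasDerivWithinAt)
      (hmono.injOn.mono (Ioo_subset_Icc_self)),
    intervalIntegral.integral_of_le Real.pi_div_two_pos.le,
    MeasureTheory.integral_Ioc_eq_integral_Ioo]
  apply MeasureTheory.setIntegral_congr_fun measurableSet_Ioo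
  intro θ hθ
  obtain ⟨hs, hc2⟩ := hIcc θ hθ
  have hst : Real.sin θ ^ 2 < 1 := by nlinarith [Real.sin_sq_add_cos_sq θ]
  have hQpos : 0 < a - c - (x - c) * Real.sin θ ^ 2 := by nlinarith
  have hsqQ : 0 < Real.sqrt (a - c - (x - c) * Real.sin θ ^ 2) := Real.sqrt_pos.2 hQpos
  have hkey : (a - f θ) * (x - f θ) * (f θ - c)
      = (a - c - (x - c) * Real.sin θ ^ 2) * ((x - c) * Real.sin θ * Real.cos θ) ^ 2 := by
    simp only [hf]
    linear_combination (-(a - c - (x - c) * Real.sin θ ^ 2) * (x - c) ^ 2 * Real.sin θ ^ 2)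
      * Real.sin_sq_add_cos_sq θ
  have hpos2 : 0 < (x - c) * Real.sin θ * Real.cos θ := by positivity
  simp only [smul_eq_mul]
  rw [show h (f θ) / Real.sqrt ((a - f θ) * (x - f θ) * (f θ - c))
      = h (f θ) / (Real.sqrt (a - c - (x - c) * Real.sin θ ^ 2)
          * ((x - c) * Real.sin θ * Real.cos θ)) by
    rw [hkey, Real.sqrt_mul hQpos.le, Real.sqrt_sq hpos2.le]]
  rw [abs_of_pos (by positivity : (0:ℝ) < (x - c) * (2 * Real.sin θ * Real.cos θ))]
  simp only [hf]
  field_simp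


lemma deriv_both (a b c : ℝ) (hcb : c < b) (hba : b < a) :
    HasDerivAt (fun x => ∫ θ in (0:ℝ)..(π/2), 2 / Real.sqrt (a - c - (x - c) * Real.sin θ ^ 2))
      (∫ θ in (0:ℝ)..(π/2), Real.sin θ ^ 2 /
        ((a - c - (b - c) * Real.sin θ ^ 2) * Real.sqrt (a - c - (b - c) * Real.sin θ ^ 2))) b ∧
    HasDerivAt (fun x => ∫ θ in (0:ℝ)..(π/2),
        2 * (c + (x - c) * Real.sin θ ^ 2) / Real.sqrt (a - c - (x - c) * Real.sin θ ^ 2))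
      (∫ θ in (0:ℝ)..(π/2),
        (2 * Real.sin θ ^ 2 / Real.sqrt (a - c - (b - c) * Real.sin θ ^ 2)
          + (c + (b - c) * Real.sin θ ^ 2) * Real.sin θ ^ 2 /
            ((a - c - (b - c) * Real.sin θ ^ 2) * Real.sqrt (a - c - (b - c) * Real.sin θ ^ 2)))) b := by
  set δ : ℝ := (a - b) / 2 with hδdef
  have hδ : 0 < δ := by simp only [hδdef]; linarith
  set ε : ℝ := min (b - c) ((a - b) / 2) with hεdef
  have hε : 0 < ε := by simp only [hεdef]; exact lt_min (by linarith) (by linarith)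
  have hball : ∀ x ∈ ball b ε, c < x ∧ ∀ θ : ℝ, δ < a - c - (x - c) * Real.sin θ ^ 2 := by
    intro x hx
    rw [mem_ball, Real.dist_eq, abs_lt] at hx
    have hx1 : c < x := by
      have := min_le_left (b - c) ((a - b) / 2); simp only [hεdef] at hx; linarith
    have hx2 : x < b + (a - b) / 2 := by
      have := min_le_right (b - c) ((a - b) / 2); simp only [hεdef] at hx; linarith
    refine ⟨hx1, fun θ => ?_⟩
    have hs1 : Real.sin θ ^ 2 ≤ 1 := Real.sin_sq_le_one θ
    have hs0 : 0 ≤ Real.sin θ ^ 2 := sq_nonneg _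
    have : (x - c) * Real.sin θ ^ 2 ≤ x - c := by nlinarith
    simp only [hδdef]; linarith
  have hbmem : b ∈ ball b ε := mem_ball_self hε
  -- derivative facts
  have hQd : ∀ (x : ℝ) (θ : ℝ),
      HasDerivAt (fun y : ℝ => a - c - (y - c) * Real.sin θ ^ 2) (-Real.sin θ ^ 2) x := by
    intro x θ
    have := ((hasDerivAt_id x).sub_const c).mul_const (Real.sin θ ^ 2)
    simpa using this.const_sub (a - c)
  have hD0 : ∀ x ∈ ball b ε, ∀ θ : ℝ,
      HasDerivAt (fun y => 2 / Real.sqrt (a - c - (y - c) * Real.sin θ ^ 2))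
        (Real.sin θ ^ 2 / ((a - c - (x - c) * Real.sin θ ^ 2)
          * Real.sqrt (a - c - (x - c) * Real.sin θ ^ 2))) x := by
    intro x hx θ
    obtain ⟨-, hQ⟩ := hball x hx
    have hQx : 0 < a - c - (x - c) * Real.sin θ ^ 2 := lt_trans hδ (hQ θ)
    have hsx : 0 < Real.sqrt (a - c - (x - c) * Real.sin θ ^ 2) := Real.sqrt_pos.2 hQx
    have hsq := (Real.hasDerivAt_sqrt hQx.ne').comp x (hQd x θ)
    have hinv := hsq.fun_inv hsx.ne'
    have := hinv.const_mul (2 : ℝ)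
    refine this.congr_deriv ?_
    simp only [Function.comp_apply]
    have h2 : Real.sqrt (a - c - (x - c) * Real.sin θ ^ 2) ^ 2
        = a - c - (x - c) * Real.sin θ ^ 2 := Real.sq_sqrt hQx.le
    field_simp
    rw [Real.sq_sqrt]
    linarith [hQx]
  have hD1 : ∀ x ∈ ball b ε, ∀ θ : ℝ,
      HasDerivAt (fun y => 2 * (c + (y - c) * Real.sin θ ^ 2)
            / Real.sqrt (a - c - (y - c) * Real.sin θ ^ 2))
        (2 * Real.sin θ ^ 2 / Real.sqrt (a - c - (x - c) * Real.sin θ ^ 2)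
          + (c + (x - c) * Real.sin θ ^ 2) * Real.sin θ ^ 2 /
            ((a - c - (x - c) * Real.sin θ ^ 2)
              * Real.sqrt (a - c - (x - c) * Real.sin θ ^ 2))) x := by
    intro x hx θ
    obtain ⟨-, hQ⟩ := hball x hx
    have hQx : 0 < a - c - (x - c) * Real.sin θ ^ 2 := lt_trans hδ (hQ θ)
    have hsx : 0 < Real.sqrt (a - c - (x - c) * Real.sin θ ^ 2) := Real.sqrt_pos.2 hQx
    have hnum : HasDerivAt (fun y : ℝ => 2 * (c + (y - c) * Real.sin θ ^ 2))
        (2 * Real.sin θ ^ 2) x := by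
      have := ((hasDerivAt_id x).sub_const c).mul_const (Real.sin θ ^ 2)
      simpa using (this.const_add c).const_mul 2
    have hsq := (Real.hasDerivAt_sqrt hQx.ne').comp x (hQd x θ)
    have := hnum.fun_div hsq hsx.ne'
    refine this.congr_deriv ?_
    simp only [Function.comp_apply]
    set S := Real.sqrt (a - c - (x - c) * Real.sin θ ^ 2) with hS
    have h2 : S * S = a - c - (x - c) * Real.sin θ ^ 2 := Real.mul_self_sqrt hQx.le
    rw [← h2]
    have hS0 : S ≠ 0 := hsx.ne'
    field_simp
    ring
  -- continuity facts
  have hQc : ∀ x : ℝ, Continuous (fun θ : ℝ => a - c - (x - c) * Real.sin θ ^ 2) := by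
    intro x; fun_prop
  have hQne : ∀ x ∈ ball b ε, ∀ θ : ℝ,
      Real.sqrt (a - c - (x - c) * Real.sin θ ^ 2) ≠ 0 := by
    intro x hx θ
    exact (Real.sqrt_pos.2 (lt_trans hδ ((hball x hx).2 θ))).ne'
  have hcont0 : ∀ x ∈ ball b ε,
      Continuous (fun θ : ℝ => 2 / Real.sqrt (a - c - (x - c) * Real.sin θ ^ 2)) := by
    intro x hx
    exact continuous_const.div (Real.continuous_sqrt.comp (hQc x)) (hQne x hx)
  have hcont1 : ∀ x ∈ ball b ε,
      Continuous (fun θ : ℝ => 2 * (c + (x - c) * Real.sin θ ^ 2)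
        / Real.sqrt (a - c - (x - c) * Real.sin θ ^ 2)) := by
    intro x hx
    exact (by fun_prop : Continuous fun θ : ℝ => 2 * (c + (x - c) * Real.sin θ ^ 2)).div
      (Real.continuous_sqrt.comp (hQc x)) (hQne x hx)
  have hQbne : ∀ θ : ℝ, (a - c - (b - c) * Real.sin θ ^ 2)
      * Real.sqrt (a - c - (b - c) * Real.sin θ ^ 2) ≠ 0 := by
    intro θ
    have h0 : 0 < a - c - (b - c) * Real.sin θ ^ 2 := lt_trans hδ ((hball b hbmem).2 θ)
    exact (mul_pos h0 (Real.sqrt_pos.2 h0)).ne'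
  have hcont0' : Continuous (fun θ : ℝ => Real.sin θ ^ 2 /
      ((a - c - (b - c) * Real.sin θ ^ 2) * Real.sqrt (a - c - (b - c) * Real.sin θ ^ 2))) := by
    exact (by fun_prop : Continuous fun θ : ℝ => Real.sin θ ^ 2).div
      ((hQc b).mul (Real.continuous_sqrt.comp (hQc b))) hQbne
  have hcont1' : Continuous (fun θ : ℝ =>
      2 * Real.sin θ ^ 2 / Real.sqrt (a - c - (b - c) * Real.sin θ ^ 2)
        + (c + (b - c) * Real.sin θ ^ 2) * Real.sin θ ^ 2 /
          ((a - c - (b - c) * Real.sin θ ^ 2) * Real.sqrt (a - c - (b - c) * Real.sin θ ^ 2))) := by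
    apply Continuous.add
    · exact (by fun_prop : Continuous fun θ : ℝ => 2 * Real.sin θ ^ 2).div
        (Real.continuous_sqrt.comp (hQc b)) (hQne b hbmem)
    · exact (by fun_prop :
          Continuous fun θ : ℝ => (c + (b - c) * Real.sin θ ^ 2) * Real.sin θ ^ 2).div
        ((hQc b).mul (Real.continuous_sqrt.comp (hQc b))) hQbne
  have hmeas0 : ∀ᶠ x in nhds b, AEStronglyMeasurable
      (fun θ : ℝ => 2 / Real.sqrt (a - c - (x - c) * Real.sin θ ^ 2))
      (volume.restrict (Set.uIoc (0:ℝ) (π/2))) := by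
    filter_upwards [ball_mem_nhds b hε] with x hx
    exact (hcont0 x hx).aestronglyMeasurable
  have hmeas1 : ∀ᶠ x in nhds b, AEStronglyMeasurable
      (fun θ : ℝ => 2 * (c + (x - c) * Real.sin θ ^ 2)
        / Real.sqrt (a - c - (x - c) * Real.sin θ ^ 2))
      (volume.restrict (Set.uIoc (0:ℝ) (π/2))) := by
    filter_upwards [ball_mem_nhds b hε] with x hx
    exact (hcont1 x hx).aestronglyMeasurable
  set M : ℝ := |c| + (b - c) + ε with hM
  have hMb : ∀ x ∈ ball b ε, ∀ θ : ℝ, |c + (x - c) * Real.sin θ ^ 2| ≤ M := by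
    intro x hx θ
    have hx1 : c < x := (hball x hx).1
    have hxe : x - b < ε := by
      rw [mem_ball, Real.dist_eq, abs_lt] at hx; exact hx.2
    have h1 : 0 ≤ (x - c) * Real.sin θ ^ 2 :=
      mul_nonneg (by linarith) (sq_nonneg _)
    have h2 : (x - c) * Real.sin θ ^ 2 ≤ x - c := by
      nlinarith [Real.sin_sq_le_one θ, sq_nonneg (Real.sin θ)]
    calc |c + (x - c) * Real.sin θ ^ 2| ≤ |c| + |(x - c) * Real.sin θ ^ 2| := abs_add_le _ _
      _ ≤ |c| + (x - c) := by rw [abs_of_nonneg h1]; linarith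
      _ ≤ M := by simp only [hM]; linarith
  have hQmono : ∀ x ∈ ball b ε, ∀ θ : ℝ,
      δ * Real.sqrt δ ≤ (a - c - (x - c) * Real.sin θ ^ 2)
        * Real.sqrt (a - c - (x - c) * Real.sin θ ^ 2) := by
    intro x hx θ
    have hQx := (hball x hx).2 θ
    exact mul_le_mul hQx.le (Real.sqrt_le_sqrt hQx.le) (Real.sqrt_nonneg _) (by linarith)
  constructor
  · have key := intervalIntegral.hasDerivAt_integral_of_dominated_loc_of_deriv_le
      (μ := volume) (a := (0:ℝ)) (b := π/2) (x₀ := b) (s := ball b ε)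
      (F := fun x θ => 2 / Real.sqrt (a - c - (x - c) * Real.sin θ ^ 2))
      (F' := fun x θ => Real.sin θ ^ 2 / ((a - c - (x - c) * Real.sin θ ^ 2)
        * Real.sqrt (a - c - (x - c) * Real.sin θ ^ 2)))
      (bound := fun _ => 1 / (δ * Real.sqrt δ))
      (ball_mem_nhds b hε) hmeas0 ((hcont0 b hbmem).intervalIntegrable _ _)
      hcont0'.aestronglyMeasurable
      ?_ (intervalIntegrable_const) ?_
    · exact key.2
    · apply Filter.Eventually.of_forall
      intro θ _ x hx
      have hQx := (hball x hx).2 θ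
      have hQp : 0 < a - c - (x - c) * Real.sin θ ^ 2 := lt_trans hδ hQx
      rw [Real.norm_eq_abs, abs_of_nonneg (div_nonneg (sq_nonneg _)
        (mul_nonneg hQp.le (Real.sqrt_nonneg _)))]
      exact div_le_div₀ (by positivity) (Real.sin_sq_le_one θ)
        (by positivity) (hQmono x hx θ)
    · apply Filter.Eventually.of_forall
      intro θ _ x hx
      exact hD0 x hx θ
  · have key := intervalIntegral.hasDerivAt_integral_of_dominated_loc_of_deriv_le
      (μ := volume) (a := (0:ℝ)) (b := π/2) (x₀ := b) (s := ball b ε)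
      (F := fun x θ => 2 * (c + (x - c) * Real.sin θ ^ 2)
        / Real.sqrt (a - c - (x - c) * Real.sin θ ^ 2))
      (F' := fun x θ => 2 * Real.sin θ ^ 2 / Real.sqrt (a - c - (x - c) * Real.sin θ ^ 2)
        + (c + (x - c) * Real.sin θ ^ 2) * Real.sin θ ^ 2 /
          ((a - c - (x - c) * Real.sin θ ^ 2)
            * Real.sqrt (a - c - (x - c) * Real.sin θ ^ 2)))
      (bound := fun _ => 2 / Real.sqrt δ + M / (δ * Real.sqrt δ))
      (ball_mem_nhds b hε) hmeas1 ((hcont1 b hbmem).intervalIntegrable _ _)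
      hcont1'.aestronglyMeasurable
      ?_ (intervalIntegrable_const) ?_
    · exact key.2
    · apply Filter.Eventually.of_forall
      intro θ _ x hx
      have hQx := (hball x hx).2 θ
      have hsd : Real.sqrt δ ≤ Real.sqrt (a - c - (x - c) * Real.sin θ ^ 2) :=
        Real.sqrt_le_sqrt hQx.le
      have t1 : |2 * Real.sin θ ^ 2 / Real.sqrt (a - c - (x - c) * Real.sin θ ^ 2)|
          ≤ 2 / Real.sqrt δ := by
        rw [abs_of_nonneg (div_nonneg (by positivity) (Real.sqrt_nonneg _))]
        exact div_le_div₀ (by positivity) (by nlinarith [Real.sin_sq_le_one θ])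
          (Real.sqrt_pos.2 hδ) hsd
      have t2 : |(c + (x - c) * Real.sin θ ^ 2) * Real.sin θ ^ 2 /
          ((a - c - (x - c) * Real.sin θ ^ 2)
            * Real.sqrt (a - c - (x - c) * Real.sin θ ^ 2))| ≤ M / (δ * Real.sqrt δ) := by
        have hQp : 0 < a - c - (x - c) * Real.sin θ ^ 2 := lt_trans hδ hQx
        rw [abs_div, abs_of_nonneg (mul_nonneg hQp.le (Real.sqrt_nonneg _))]
        have hM0 : 0 ≤ M := le_trans (abs_nonneg _) (hMb x hx θ)
        apply div_le_div₀ (by positivity) ?_ (by positivity) (hQmono x hx θ)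
        calc |(c + (x - c) * Real.sin θ ^ 2) * Real.sin θ ^ 2|
            = |c + (x - c) * Real.sin θ ^ 2| * Real.sin θ ^ 2 := by
              rw [abs_mul, abs_of_nonneg (sq_nonneg (Real.sin θ))]
          _ ≤ M * 1 := mul_le_mul (hMb x hx θ) (Real.sin_sq_le_one θ) (sq_nonneg _)
              (le_trans (abs_nonneg _) (hMb x hx θ))
          _ = M := mul_one M
      rw [Real.norm_eq_abs]
      calc _ ≤ _ := abs_add_le _ _
        _ ≤ 2 / Real.sqrt δ + M / (δ * Real.sqrt δ) := add_le_add t1 t2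
    · apply Filter.Eventually.of_forall
      intro θ _ x hx
      exact hD1 x hx θ


lemma ftc_lemma (a b c : ℝ) (hcb : c < b) (hba : b < a) :
    ∫ θ in (0:ℝ)..(π/2),
      ((Real.cos θ ^ 2 - Real.sin θ ^ 2) / Real.sqrt (a - c - (b - c) * Real.sin θ ^ 2)
        + (b - c) * Real.sin θ ^ 2 * Real.cos θ ^ 2 /
          ((a - c - (b - c) * Real.sin θ ^ 2)
            * Real.sqrt (a - c - (b - c) * Real.sin θ ^ 2))) = 0 := by
  have hQpos : ∀ θ : ℝ, 0 < a - c - (b - c) * Real.sin θ ^ 2 := by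
    intro θ
    nlinarith [Real.sin_sq_le_one θ, sq_nonneg (Real.sin θ)]
  have hSpos : ∀ θ : ℝ, 0 < Real.sqrt (a - c - (b - c) * Real.sin θ ^ 2) :=
    fun θ => Real.sqrt_pos.2 (hQpos θ)
  have hQd : ∀ θ : ℝ, HasDerivAt (fun t : ℝ => a - c - (b - c) * Real.sin t ^ 2)
      (-((b - c) * (2 * Real.sin θ * Real.cos θ))) θ := by
    intro θ
    have h1 : HasDerivAt (fun t : ℝ => Real.sin t ^ 2) (2 * Real.sin θ * Real.cos θ) θ := by
      simpa [mul_comm, mul_assoc, pow_two] using ((Real.hasDerivAt_sin θ).fun_pow 2)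
    simpa [mul_comm, mul_left_comm, mul_assoc] using (h1.const_mul (b - c)).const_sub (a - c)
  have hphi : ∀ θ : ℝ, HasDerivAt
      (fun t => Real.sin t * Real.cos t / Real.sqrt (a - c - (b - c) * Real.sin t ^ 2))
      ((Real.cos θ ^ 2 - Real.sin θ ^ 2) / Real.sqrt (a - c - (b - c) * Real.sin θ ^ 2)
        + (b - c) * Real.sin θ ^ 2 * Real.cos θ ^ 2 /
          ((a - c - (b - c) * Real.sin θ ^ 2)
            * Real.sqrt (a - c - (b - c) * Real.sin θ ^ 2))) θ := by
    intro θ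
    have hnum : HasDerivAt (fun t : ℝ => Real.sin t * Real.cos t)
        (Real.cos θ ^ 2 - Real.sin θ ^ 2) θ := by
      have := (Real.hasDerivAt_sin θ).fun_mul (Real.hasDerivAt_cos θ)
      exact this.congr_deriv (by ring)
    have hsq := (Real.hasDerivAt_sqrt (hQpos θ).ne').comp θ (hQd θ)
    have := hnum.fun_div hsq (hSpos θ).ne'
    refine this.congr_deriv ?_
    simp only [Function.comp_apply]
    set S := Real.sqrt (a - c - (b - c) * Real.sin θ ^ 2) with hS
    have h2 : S * S = a - c - (b - c) * Real.sin θ ^ 2 := Real.mul_self_sqrt (hQpos θ).le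
    rw [← h2]
    have hS0 : S ≠ 0 := (hSpos θ).ne'
    field_simp
    ring
  have hcont : Continuous (fun θ : ℝ =>
      (Real.cos θ ^ 2 - Real.sin θ ^ 2) / Real.sqrt (a - c - (b - c) * Real.sin θ ^ 2)
        + (b - c) * Real.sin θ ^ 2 * Real.cos θ ^ 2 /
          ((a - c - (b - c) * Real.sin θ ^ 2)
            * Real.sqrt (a - c - (b - c) * Real.sin θ ^ 2))) := by
    apply Continuous.add
    · exact (by fun_prop : Continuous fun θ : ℝ => Real.cos θ ^ 2 - Real.sin θ ^ 2).div
        (Real.continuous_sqrt.comp (by fun_prop)) (fun θ => (hSpos θ).ne')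
    · exact (by fun_prop :
          Continuous fun θ : ℝ => (b - c) * Real.sin θ ^ 2 * Real.cos θ ^ 2).div
        ((by fun_prop : Continuous fun θ : ℝ => a - c - (b - c) * Real.sin θ ^ 2).mul
          (Real.continuous_sqrt.comp (by fun_prop)))
        (fun θ => (mul_pos (hQpos θ) (hSpos θ)).ne')
  rw [intervalIntegral.integral_eq_sub_of_hasDerivAt (fun θ _ => hphi θ)
    (hcont.intervalIntegrable _ _)]
  simp [Real.cos_pi_div_two]


theorem stmt_11 (a b c : ℝ) (hcb : c < b) (hba : b < a) :
    HasDerivAt (J0f a c)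
      (-(J1f a c b - b * J0f a c b) / (2 * (a - b) * (b - c))) b ∧
    HasDerivAt (J1f a c)
      ((1/2) * J0f a c b +
        b * (-(J1f a c b - b * J0f a c b) / (2 * (a - b) * (b - c)))) b := by
  have hQpos : ∀ θ : ℝ, 0 < a - c - (b - c) * Real.sin θ ^ 2 := by
    intro θ
    nlinarith [Real.sin_sq_le_one θ, sq_nonneg (Real.sin θ)]
  have hSpos : ∀ θ : ℝ, 0 < Real.sqrt (a - c - (b - c) * Real.sin θ ^ 2) := fun θ => Real.sqrt_pos.2 (hQpos θ)
  -- J0f, J1f agree with the substituted integrals near b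
  have hJ0 : ∀ x ∈ Set.Ioo c a, J0f a c x
      = -∫ θ in (0:ℝ)..(π/2), 2 / Real.sqrt (a - c - (x - c) * Real.sin θ ^ 2) := by
    intro x hx
    rw [J0f, cov_lemma a c (fun _ => 1) hx.1 hx.2]
    simp only [mul_one]
  have hJ1 : ∀ x ∈ Set.Ioo c a, J1f a c x
      = -∫ θ in (0:ℝ)..(π/2), 2 * (c + (x - c) * Real.sin θ ^ 2)
          / Real.sqrt (a - c - (x - c) * Real.sin θ ^ 2) := by
    intro x hx
    rw [J1f, cov_lemma a c (fun z => z) hx.1 hx.2]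
  have hmem : Set.Ioo c a ∈ nhds b := isOpen_Ioo.mem_nhds ⟨hcb, hba⟩
  have hbIoo : b ∈ Set.Ioo c a := ⟨hcb, hba⟩
  obtain ⟨hd0', hd1'⟩ := deriv_both a b c hcb hba
  have hd0 : HasDerivAt (J0f a c) (-∫ θ in (0:ℝ)..(π/2), Real.sin θ ^ 2 / ((a - c - (b - c) * Real.sin θ ^ 2) * Real.sqrt (a - c - (b - c) * Real.sin θ ^ 2))) b := by
    apply hd0'.neg.congr_of_eventuallyEq
    filter_upwards [hmem] with x hx
    exact hJ0 x hx
  have hd1 : HasDerivAt (J1f a c) (-∫ θ in (0:ℝ)..(π/2), (2 * Real.sin θ ^ 2 / Real.sqrt (a - c - (b - c) * Real.sin θ ^ 2) + (c + (b - c) * Real.sin θ ^ 2) * Real.sin θ ^ 2 / ((a - c - (b - c) * Real.sin θ ^ 2) * Real.sqrt (a - c - (b - c) * Real.sin θ ^ 2)))) b := by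
    apply hd1'.neg.congr_of_eventuallyEq
    filter_upwards [hmem] with x hx
    exact hJ1 x hx
  have hftc := ftc_lemma a b c hcb hba
  -- integrability of all the pieces
  have hcQ : Continuous (fun θ : ℝ => (a - c - (b - c) * Real.sin θ ^ 2)) := by fun_prop
  have hcS : Continuous (fun θ : ℝ => Real.sqrt (a - c - (b - c) * Real.sin θ ^ 2)) := Real.continuous_sqrt.comp hcQ
  have hSne : ∀ θ : ℝ, Real.sqrt (a - c - (b - c) * Real.sin θ ^ 2) ≠ 0 := fun θ => (hSpos θ).ne'
  have hQSne : ∀ θ : ℝ, (a - c - (b - c) * Real.sin θ ^ 2) * Real.sqrt (a - c - (b - c) * Real.sin θ ^ 2) ≠ 0 :=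
    fun θ => (mul_pos (hQpos θ) (hSpos θ)).ne'
  have icD0 : IntervalIntegrable (fun θ : ℝ => Real.sin θ ^ 2 / ((a - c - (b - c) * Real.sin θ ^ 2) * Real.sqrt (a - c - (b - c) * Real.sin θ ^ 2))) volume 0 (π/2) :=
    (((by fun_prop : Continuous fun θ : ℝ => Real.sin θ ^ 2).div (hcQ.mul hcS) hQSne)).intervalIntegrable _ _
  have icpsi : IntervalIntegrable (fun θ : ℝ => ((Real.cos θ ^ 2 - Real.sin θ ^ 2) / Real.sqrt (a - c - (b - c) * Real.sin θ ^ 2) + (b - c) * Real.sin θ ^ 2 * Real.cos θ ^ 2 / ((a - c - (b - c) * Real.sin θ ^ 2) * Real.sqrt (a - c - (b - c) * Real.sin θ ^ 2)))) volume 0 (π/2) := by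
    apply Continuous.intervalIntegrable
    apply Continuous.add
    · exact (by fun_prop : Continuous fun θ : ℝ => Real.cos θ ^ 2 - Real.sin θ ^ 2).div hcS hSne
    · exact (by fun_prop : Continuous fun θ : ℝ => (b - c) * Real.sin θ ^ 2 * Real.cos θ ^ 2).div (hcQ.mul hcS) hQSne
  have icg1 : IntervalIntegrable (fun θ : ℝ => 2 / Real.sqrt (a - c - (b - c) * Real.sin θ ^ 2)) volume 0 (π/2) :=
    (continuous_const.div hcS hSne).intervalIntegrable _ _
  have icgc : IntervalIntegrable (fun θ : ℝ => Real.cos θ ^ 2 / Real.sqrt (a - c - (b - c) * Real.sin θ ^ 2)) volume 0 (π/2) :=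
    ((by fun_prop : Continuous fun θ : ℝ => Real.cos θ ^ 2).div hcS hSne).intervalIntegrable _ _
  -- pointwise identities
  have hSS : ∀ θ : ℝ, Real.sqrt (a - c - (b - c) * Real.sin θ ^ 2) * Real.sqrt (a - c - (b - c) * Real.sin θ ^ 2) = (a - c - (b - c) * Real.sin θ ^ 2) := fun θ => Real.mul_self_sqrt (hQpos θ).le
  have pwA : ∀ θ : ℝ, Real.cos θ ^ 2 / Real.sqrt (a - c - (b - c) * Real.sin θ ^ 2) = (a - b) * (Real.sin θ ^ 2 / ((a - c - (b - c) * Real.sin θ ^ 2) * Real.sqrt (a - c - (b - c) * Real.sin θ ^ 2))) + ((Real.cos θ ^ 2 - Real.sin θ ^ 2) / Real.sqrt (a - c - (b - c) * Real.sin θ ^ 2) + (b - c) * Real.sin θ ^ 2 * Real.cos θ ^ 2 / ((a - c - (b - c) * Real.sin θ ^ 2) * Real.sqrt (a - c - (b - c) * Real.sin θ ^ 2))) := by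
    intro θ
    have hc2 : Real.cos θ ^ 2 = 1 - Real.sin θ ^ 2 := by
      nlinarith [Real.sin_sq_add_cos_sq θ]
    have h1 := hSS θ
    have h2 := hSne θ
    have h3 := (hQpos θ).ne'
    rw [hc2]
    have h3' : a - c - Real.sin θ ^ 2 * (b - c) ≠ 0 := by rw [mul_comm]; exact h3
    field_simp
    ring_nf
  have pwB : ∀ θ : ℝ, 2 * (c + (b - c) * Real.sin θ ^ 2) / Real.sqrt (a - c - (b - c) * Real.sin θ ^ 2) - b * (2 / Real.sqrt (a - c - (b - c) * Real.sin θ ^ 2)) = -(2 * (b - c)) * (Real.cos θ ^ 2 / Real.sqrt (a - c - (b - c) * Real.sin θ ^ 2)) := by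
    intro θ
    have hc2 : Real.cos θ ^ 2 = 1 - Real.sin θ ^ 2 := by
      nlinarith [Real.sin_sq_add_cos_sq θ]
    have h2 := hSne θ
    rw [hc2]
    field_simp
    ring
  have pwC : ∀ θ : ℝ, (2 * Real.sin θ ^ 2 / Real.sqrt (a - c - (b - c) * Real.sin θ ^ 2) + (c + (b - c) * Real.sin θ ^ 2) * Real.sin θ ^ 2 / ((a - c - (b - c) * Real.sin θ ^ 2) * Real.sqrt (a - c - (b - c) * Real.sin θ ^ 2))) = (1/2) * (2 / Real.sqrt (a - c - (b - c) * Real.sin θ ^ 2)) + b * (Real.sin θ ^ 2 / ((a - c - (b - c) * Real.sin θ ^ 2) * Real.sqrt (a - c - (b - c) * Real.sin θ ^ 2))) - ((Real.cos θ ^ 2 - Real.sin θ ^ 2) / Real.sqrt (a - c - (b - c) * Real.sin θ ^ 2) + (b - c) * Real.sin θ ^ 2 * Real.cos θ ^ 2 / ((a - c - (b - c) * Real.sin θ ^ 2) * Real.sqrt (a - c - (b - c) * Real.sin θ ^ 2))) := by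
    intro θ
    have hc2 : Real.cos θ ^ 2 = 1 - Real.sin θ ^ 2 := by
      nlinarith [Real.sin_sq_add_cos_sq θ]
    have h1 := hSS θ
    have h2 := hSne θ
    have h3 := (hQpos θ).ne'
    rw [hc2]
    field_simp
    ring_nf
  -- integral identities
  have hC : (∫ θ in (0:ℝ)..(π/2), Real.cos θ ^ 2 / Real.sqrt (a - c - (b - c) * Real.sin θ ^ 2))
      = (a - b) * ∫ θ in (0:ℝ)..(π/2), Real.sin θ ^ 2 / ((a - c - (b - c) * Real.sin θ ^ 2) * Real.sqrt (a - c - (b - c) * Real.sin θ ^ 2)) := by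
    rw [intervalIntegral.integral_congr (fun θ _ => pwA θ),
      intervalIntegral.integral_add (icD0.const_mul _) icpsi,
      intervalIntegral.integral_const_mul, hftc, add_zero]
  have hB : (∫ θ in (0:ℝ)..(π/2), 2 * (c + (b - c) * Real.sin θ ^ 2) / Real.sqrt (a - c - (b - c) * Real.sin θ ^ 2)) - b * ∫ θ in (0:ℝ)..(π/2), 2 / Real.sqrt (a - c - (b - c) * Real.sin θ ^ 2)
      = -(2 * (b - c)) * ∫ θ in (0:ℝ)..(π/2), Real.cos θ ^ 2 / Real.sqrt (a - c - (b - c) * Real.sin θ ^ 2) := by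
    have icg2 : IntervalIntegrable
        (fun θ : ℝ => 2 * (c + (b - c) * Real.sin θ ^ 2)
          / Real.sqrt (a - c - (b - c) * Real.sin θ ^ 2)) volume 0 (π/2) := by
      apply Continuous.intervalIntegrable
      exact (by fun_prop : Continuous fun θ : ℝ =>
        2 * (c + (b - c) * Real.sin θ ^ 2)).div hcS hSne
    rw [← intervalIntegral.integral_const_mul b, ← intervalIntegral.integral_sub
      icg2 (icg1.const_mul b), ← intervalIntegral.integral_const_mul]
    exact intervalIntegral.integral_congr (fun θ _ => pwB θ)
  have hD1 : (∫ θ in (0:ℝ)..(π/2), (2 * Real.sin θ ^ 2 / Real.sqrt (a - c - (b - c) * Real.sin θ ^ 2) + (c + (b - c) * Real.sin θ ^ 2) * Real.sin θ ^ 2 / ((a - c - (b - c) * Real.sin θ ^ 2) * Real.sqrt (a - c - (b - c) * Real.sin θ ^ 2))))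
      = (1/2) * (∫ θ in (0:ℝ)..(π/2), 2 / Real.sqrt (a - c - (b - c) * Real.sin θ ^ 2)) + b * ∫ θ in (0:ℝ)..(π/2), Real.sin θ ^ 2 / ((a - c - (b - c) * Real.sin θ ^ 2) * Real.sqrt (a - c - (b - c) * Real.sin θ ^ 2)) := by
    rw [intervalIntegral.integral_congr (fun θ _ => pwC θ),
      intervalIntegral.integral_sub ((icg1.const_mul _).add (icD0.const_mul _)) icpsi,
      intervalIntegral.integral_add (icg1.const_mul _) (icD0.const_mul _),
      intervalIntegral.integral_const_mul, intervalIntegral.integral_const_mul, hftc, sub_zero]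
  -- values of J0f, J1f at b
  have hJ0b := hJ0 b hbIoo
  have hJ1b := hJ1 b hbIoo
  have hval : -(J1f a c b - b * J0f a c b) / (2 * (a - b) * (b - c))
      = -∫ θ in (0:ℝ)..(π/2), Real.sin θ ^ 2 / ((a - c - (b - c) * Real.sin θ ^ 2) * Real.sqrt (a - c - (b - c) * Real.sin θ ^ 2)) := by
    rw [hJ0b, hJ1b]
    have hab : a - b ≠ 0 := by linarith
    have hbc : b - c ≠ 0 := by linarith
    rw [show -(((-∫ θ in (0:ℝ)..(π/2), 2 * (c + (b - c) * Real.sin θ ^ 2) / Real.sqrt (a - c - (b - c) * Real.sin θ ^ 2))) - b * (-∫ θ in (0:ℝ)..(π/2), 2 / Real.sqrt (a - c - (b - c) * Real.sin θ ^ 2)))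
        = (∫ θ in (0:ℝ)..(π/2), 2 * (c + (b - c) * Real.sin θ ^ 2) / Real.sqrt (a - c - (b - c) * Real.sin θ ^ 2)) - b * ∫ θ in (0:ℝ)..(π/2), 2 / Real.sqrt (a - c - (b - c) * Real.sin θ ^ 2) by ring,
      hB, hC]
    field_simp
  constructor
  · rw [hval]; exact hd0
  · rw [hval, hJ0b]
    have : (1/2) * (-∫ θ in (0:ℝ)..(π/2), 2 / Real.sqrt (a - c - (b - c) * Real.sin θ ^ 2)) + b * (-∫ θ in (0:ℝ)..(π/2), Real.sin θ ^ 2 / ((a - c - (b - c) * Real.sin θ ^ 2) * Real.sqrt (a - c - (b - c) * Real.sin θ ^ 2)))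
        = -∫ θ in (0:ℝ)..(π/2), (2 * Real.sin θ ^ 2 / Real.sqrt (a - c - (b - c) * Real.sin θ ^ 2) + (c + (b - c) * Real.sin θ ^ 2) * Real.sin θ ^ 2 / ((a - c - (b - c) * Real.sin θ ^ 2) * Real.sqrt (a - c - (b - c) * Real.sin θ ^ 2))) := by
      rw [hD1]; ring
    rw [this]
    exact hd1
end
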